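/- Heuristic lower bound via observation-indexed value functions. Let (ṽ_{y'})_{y' ∈ Y} be the unique family of bounded functions ṽ_{y'} : S × B → ℝ satisfying, for all y' ∈ Y, s ∈ S, b ∈ B: ṽ_{y'}(s, b) = min_{a ∈ 𝒜 s} ( c s y' a + β * Σ_{s'} p y' s a s' * Σ_{y''} σ(y'' | λ(y', b)) * ṽ_{y''}(s', λ(y', b)) ) (such a family exists and is unique since the defining system is a β-contraction in the sup norm on bounded functions Y × S × B → ℝ). Then for every s ∈ S and every b ∈ B: v*(s, b) ≥ Σ_{y'} σ(y' | b) * ṽ_{y'}(s, b). -/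

import Mathlib

open Finset

/-- The belief simplex over the modulation space `M`. -/
abbrev Belief (M : Type) [Fintype M] : Type :=
  {b : M → ℝ // (∀ μ, 0 ≤ b μ) ∧ ∑ μ, b μ = 1}

/-- A finite SEP-POMDP: feasible action sets, cost function, state transition
probabilities, modulation/observation probabilities, and a discount factor. -/
structure SEP (S Y M A : Type) [Fintype S] [Fintype Y] [Fintype M] [Fintype A] where
  act : S → Finset A
  act_ne : ∀ s, (act s).Nonempty
  c : S → Y → A → ℝ
  p : Y → S → A → S → ℝ
  p_nonneg : ∀ y' s a s', 0 ≤ p y' s a s'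
  p_sum : ∀ y' s a, ∑ s', p y' s a s' = 1
  Q : M → Y → M → ℝ
  Q_nonneg : ∀ μ y' μ', 0 ≤ Q μ y' μ'
  Q_sum : ∀ μ, ∑ y', ∑ μ', Q μ y' μ' = 1
  β : ℝ
  β_nonneg : 0 ≤ β
  β_lt_one : β < 1

namespace SEP

variable {S Y M A : Type} [Fintype S] [Fintype Y] [Fintype M] [Fintype A]

/-- `σ(y' | b) = ∑ μ, ∑ μ', b μ * Q μ y' μ'`. -/
def sig (P : SEP S Y M A) (b : Belief M) (y' : Y) : ℝ :=
  ∑ μ, ∑ μ', b.1 μ * P.Q μ y' μ'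

/-- The Bayesian belief update `λ(y', b)`. -/
noncomputable def lam (P : SEP S Y M A) (y' : Y) (b : Belief M) : Belief M :=
  if h : 0 < P.sig b y' then
    ⟨fun μ' => (∑ μ, b.1 μ * P.Q μ y' μ') / P.sig b y',
      fun μ' => div_nonneg (Finset.sum_nonneg fun μ _ =>
        mul_nonneg (b.2.1 μ) (P.Q_nonneg μ y' μ')) h.le,
      by
        rw [← Finset.sum_div, Finset.sum_comm]
        exact div_self (ne_of_gt h)⟩
  else b

/-- `h_{y'}(s, a, v̄) = c s y' a + β * ∑ s', p y' s a s' * v̄ s'`. -/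
def hy (P : SEP S Y M A) (y' : Y) (s : S) (a : A) (vb : S → ℝ) : ℝ :=
  P.c s y' a + P.β * ∑ s', P.p y' s a s' * vb s'

/-- The Bellman operator `H` of the SEP-POMDP. -/
noncomputable def H (P : SEP S Y M A) (v : S → Belief M → ℝ) (s : S) (b : Belief M) : ℝ :=
  (P.act s).inf' (P.act_ne s) fun a =>
    ∑ y', P.sig b y' * P.hy y' s a fun s' => v s' (P.lam y' b)

/-- Boundedness of a function `v : S × B → ℝ`. -/
def Bdd (v : S → Belief M → ℝ) : Prop :=
  ∃ C, ∀ s b, |v s b| ≤ C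

end SEP

/-!
The aggregated family `w(s, b) = ∑ y', σ(y' | b) ṽ_{y'}(s, b)` is a subsolution of the Bellman
equation: each `ṽ_{y'}(s, b)` is a minimum over actions, and averaging minima with the weights
`σ(· | b)` gives at most the minimum of the averages, which is `(Hw)(s, b)`. Since `H` commutes
with adding constants up to the factor `β` and is monotone, the supremum `D` of `w - v*` satisfies
`D ≤ β D`, hence `D ≤ 0`.
-/

open Finset

theorem le_zero_of_le_imp_le_mul {X : Type*} {β : ℝ} (hβ : β < 1) (f : X → ℝ)
    (hf : BddAbove (Set.range f)) (hcontract : ∀ D, (∀ x, f x ≤ D) → ∀ x, f x ≤ β * D) (x : X) :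
    f x ≤ 0 := by
  have : Nonempty X := ⟨x⟩
  have hsup : ⨆ x, f x ≤ β * ⨆ x, f x := ciSup_le (hcontract _ fun x => le_ciSup hf x)
  have : ⨆ x, f x ≤ 0 := by nlinarith
  exact (le_ciSup hf x).trans this

namespace SEP

variable {S Y M A : Type} [Fintype S] [Fintype Y] [Fintype M] [Fintype A] (P : SEP S Y M A)

theorem sig_nonneg (b : Belief M) (y' : Y) : 0 ≤ P.sig b y' :=
  sum_nonneg fun μ _ => sum_nonneg fun μ' _ => mul_nonneg (b.2.1 μ) (P.Q_nonneg μ y' μ')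

theorem sum_sig (b : Belief M) : ∑ y', P.sig b y' = 1 := by
  simp only [sig, ← mul_sum]
  rw [sum_comm]
  simp only [← mul_sum, P.Q_sum, mul_one, b.2.2]

theorem hy_le_add {u v : S → ℝ} {D : ℝ} (huv : ∀ s', u s' ≤ v s' + D) (y' : Y) (s : S) (a : A) :
    P.hy y' s a u ≤ P.hy y' s a v + P.β * D := by
  have hsum : ∑ s', P.p y' s a s' * u s' ≤ ∑ s', P.p y' s a s' * v s' + D :=
    calc ∑ s', P.p y' s a s' * u s' ≤ ∑ s', P.p y' s a s' * (v s' + D) :=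
          sum_le_sum fun s' _ => mul_le_mul_of_nonneg_left (huv s') (P.p_nonneg y' s a s')
      _ = ∑ s', P.p y' s a s' * v s' + D := by
          simp only [mul_add, sum_add_distrib, ← sum_mul, P.p_sum, one_mul]
  have := mul_le_mul_of_nonneg_left hsum P.β_nonneg
  simp only [hy]
  linarith

theorem H_le_add {u v : S → Belief M → ℝ} {D : ℝ} (huv : ∀ s b, u s b ≤ v s b + D)
    (s : S) (b : Belief M) : P.H u s b ≤ P.H v s b + P.β * D := by
  obtain ⟨a, ha, hmin⟩ := exists_mem_eq_inf' (P.act_ne s)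
    fun a => ∑ y', P.sig b y' * P.hy y' s a fun s' => v s' (P.lam y' b)
  calc P.H u s b ≤ ∑ y', P.sig b y' * P.hy y' s a (fun s' => u s' (P.lam y' b)) :=
        inf'_le _ ha
    _ ≤ ∑ y', P.sig b y' * (P.hy y' s a (fun s' => v s' (P.lam y' b)) + P.β * D) :=
        sum_le_sum fun y' _ => mul_le_mul_of_nonneg_left
          (P.hy_le_add (fun s' => huv s' _) y' s a) (P.sig_nonneg b y')
    _ = P.H v s b + P.β * D := by
        rw [H, hmin]
        simp only [mul_add, sum_add_distrib, ← sum_mul, P.sum_sig, one_mul]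

theorem le_of_le_H_of_eq_H {u v : S → Belief M → ℝ} (hu : ∃ C, ∀ s b, u s b ≤ C)
    (hv : ∃ C, ∀ s b, C ≤ v s b) (hsub : ∀ s b, u s b ≤ P.H u s b)
    (hfix : ∀ s b, v s b = P.H v s b) (s : S) (b : Belief M) : u s b ≤ v s b := by
  obtain ⟨Cu, hCu⟩ := hu
  obtain ⟨Cv, hCv⟩ := hv
  have hcontract : ∀ D, (∀ x : S × Belief M, u x.1 x.2 - v x.1 x.2 ≤ D) →
      ∀ x : S × Belief M, u x.1 x.2 - v x.1 x.2 ≤ P.β * D := by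
    rintro D hD ⟨s, b⟩
    have := P.H_le_add (u := u) (v := v) (fun s b => by linarith [hD (s, b)]) s b
    linarith [hsub s b, hfix s b]
  have hgap := le_zero_of_le_imp_le_mul P.β_lt_one (fun x : S × Belief M => u x.1 x.2 - v x.1 x.2)
    ⟨Cu - Cv, by rintro _ ⟨⟨s, b⟩, rfl⟩; linarith [hCu s b, hCv s b]⟩ hcontract (s, b)
  linarith

def average (vt : Y → S → Belief M → ℝ) (s : S) (b : Belief M) : ℝ :=
  ∑ y', P.sig b y' * vt y' s b

theorem average_le_of_le {vt : Y → S → Belief M → ℝ} {C : ℝ} (hC : ∀ y' s b, vt y' s b ≤ C)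
    (s : S) (b : Belief M) : P.average vt s b ≤ C :=
  calc P.average vt s b ≤ ∑ y', P.sig b y' * C :=
        sum_le_sum fun y' _ => mul_le_mul_of_nonneg_left (hC y' s b) (P.sig_nonneg b y')
    _ = C := by rw [← sum_mul, P.sum_sig, one_mul]

theorem average_le_H_average {vt : Y → S → Belief M → ℝ}
    (hvt : ∀ (y' : Y) (s : S) (b : Belief M),
      vt y' s b = (P.act s).inf' (P.act_ne s) fun a =>
        P.c s y' a + P.β * ∑ s', P.p y' s a s' *
          ∑ y'', P.sig (P.lam y' b) y'' * vt y'' s' (P.lam y' b))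
    (s : S) (b : Belief M) : P.average vt s b ≤ P.H (P.average vt) s b :=
  le_inf' _ _ fun _ ha => sum_le_sum fun y' _ =>
    mul_le_mul_of_nonneg_left ((hvt y' s b).trans_le (inf'_le _ ha)) (P.sig_nonneg b y')

end SEP

theorem heuristic_lower_bound_general
    {S Y M A : Type} [Fintype S] [Fintype Y] [Fintype M] [Fintype A]
    (P : SEP S Y M A)
    -- the observation-indexed family and its fixed-point system
    (vt : Y → S → Belief M → ℝ)
    (hvtbdd : ∃ C, ∀ y' s b, |vt y' s b| ≤ C)
    (hvt : ∀ (y' : Y) (s : S) (b : Belief M),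
      vt y' s b = (P.act s).inf' (P.act_ne s) fun a =>
        P.c s y' a + P.β * ∑ s', P.p y' s a s' *
          ∑ y'', P.sig (P.lam y' b) y'' * vt y'' s' (P.lam y' b))
    -- the unique bounded fixed point of H
    (vstar : S → Belief M → ℝ) (hbdd : SEP.Bdd vstar)
    (hfix : ∀ s b, vstar s b = P.H vstar s b) :
    ∀ (s : S) (b : Belief M), ∑ y', P.sig b y' * vt y' s b ≤ vstar s b := by
  obtain ⟨C, hC⟩ := hvtbdd
  obtain ⟨C', hC'⟩ := hbdd
  exact P.le_of_le_H_of_eq_H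
    ⟨C, P.average_le_of_le fun y' s b => (le_abs_self _).trans (hC y' s b)⟩
    ⟨-C', fun s b => neg_le_of_abs_le (hC' s b)⟩
    (P.average_le_H_average hvt) hfix

/-- **Heuristic lower bound via observation-indexed value functions.** If
`(vt y')_{y' ∈ Y}` is the (unique bounded) family of observation-indexed
value functions satisfying the coupled fixed-point system, then
`∑ y', σ(y' | b) * vt y' s b ≤ vstar s b` for all `s` and `b`. -/
theorem heuristic_lower_bound
    {S Y M A : Type} [Fintype S] [Fintype Y] [Fintype M] [Fintype A]
    [Nonempty S] [Nonempty Y] [Nonempty M] [Nonempty A]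
    (P : SEP S Y M A)
    -- the observation-indexed family and its fixed-point system
    (vt : Y → S → Belief M → ℝ)
    (hvtbdd : ∃ C, ∀ y' s b, |vt y' s b| ≤ C)
    (hvt : ∀ (y' : Y) (s : S) (b : Belief M),
      vt y' s b = (P.act s).inf' (P.act_ne s) fun a =>
        P.c s y' a + P.β * ∑ s', P.p y' s a s' *
          ∑ y'', P.sig (P.lam y' b) y'' * vt y'' s' (P.lam y' b))
    -- the unique bounded fixed point of H
    (vstar : S → Belief M → ℝ) (hbdd : SEP.Bdd vstar)
    (hfix : ∀ s b, vstar s b = P.H vstar s b) :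
    ∀ (s : S) (b : Belief M), ∑ y', P.sig b y' * vt y' s b ≤ vstar s b :=
  heuristic_lower_bound_general P vt hvtbdd hvt vstar hbdd hfix
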